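/- In the single-switching-channel CTS construction with dependent set D = {1,…,n} (channel i owned by process p_i, cyclically ordered), if each process p_i is in the state expecting next communication d_i, and the configuration is 'set up for channel 1' (p_1 expects 1, p_2 expects 1, and each p_i with i > 1 expects channel i−1 where relevant), then in the parallel composition the only enabled channel among D is channel 1. -/
import Mathlib


/-- A local state of the single-switching-channel construction:
`c` is the channel assigned to the process, `sc` the current switching
channel, `D` the current dependent set, and `d` the next channel on which the
process expects a communication. -/
structure PState (n : ℕ) where
  c : Fin (n + 1)
  sc : Fin (n + 1)
  D : Finset (Fin (n + 1))
  d : Fin (n + 1)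

/-- The cyclic predecessor on the dependent set `D = {c₁, …, c_n}` of the
process-owned channels, ordered naturally; the identity outside `D`. -/
def prevCyc (n : ℕ) (i : Fin (n + 1)) : Fin (n + 1) :=
  if h : 0 < n ∧ (i : ℕ) < n then
    ⟨((i : ℕ) + (n - 1)) % n, Nat.lt_succ_of_lt (Nat.mod_lt _ h.1)⟩
  else i

/-- The listening set: `{sc, c, prev_D c}` if `c ∈ D`, and `{sc, c}`
otherwise. -/
def listens {n : ℕ} (prev : Fin (n + 1) → Fin (n + 1)) (s : PState n)
    (ch : Fin (n + 1)) : Prop :=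
  ch = s.sc ∨ ch = s.c ∨ (s.c ∈ s.D ∧ ch = prev s.c)

/-- The cycling transitions: from `(c, sc, D, c)` a communication on `c`
leads to `(c, sc, D, prev_D c)`, and from `(c, sc, D, prev_D c)` a
communication on `prev_D c` leads back to `(c, sc, D, c)`. -/
def cycTrans {n : ℕ} (prev : Fin (n + 1) → Fin (n + 1)) (s : PState n)
    (ch : Fin (n + 1)) (s' : PState n) : Prop :=
  (ch = s.c ∧ s.d = s.c ∧ s' = ⟨s.c, s.sc, s.D, prev s.c⟩) ∨
    (ch = prev s.c ∧ s.d = prev s.c ∧ s' = ⟨s.c, s.sc, s.D, s.c⟩)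

/-- A channel is enabled in the parallel composition iff at least one process
listens to it and every listening process has a matching transition. -/
def Enabled {n : ℕ} (prev : Fin (n + 1) → Fin (n + 1))
    (f : Fin n → PState n) (ch : Fin (n + 1)) : Prop :=
  (∃ p, listens prev (f p) ch) ∧
    ∀ p, listens prev (f p) ch → ∃ s', cycTrans prev (f p) ch s'

/-- The configuration of Figure 2: the dependent set is `D = {c₁, …, c_n}`
(all process-owned channels), the switching channel is `c_{n+1}`, process `p₁`
expects channel `c₁`, and every process `p_i` with `i > 1` expects channel
`c_{i-1} = prev_D(c_i)` (0-indexed here). -/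
def config (n : ℕ) : Fin n → PState n := fun p =>
  { c := ⟨(p : ℕ), Nat.lt_succ_of_lt p.isLt⟩
    sc := ⟨n, Nat.lt_succ_self n⟩
    D := Finset.univ.filter (fun i : Fin (n + 1) => (i : ℕ) < n)
    d := if (p : ℕ) = 0 then ⟨0, by have := p.isLt; omega⟩
      else ⟨(p : ℕ) - 1, by have := p.isLt; omega⟩ }

lemma prevCyc_val {n : ℕ} (i : Fin (n + 1)) (hn : 0 < n) (h : (i : ℕ) < n) :
    ((prevCyc n i : ℕ)) = ((i : ℕ) + (n - 1)) % n := by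
  simp [prevCyc, hn, h]

lemma prevCyc_val_pos {n : ℕ} (i : Fin (n + 1)) (hn : 0 < n) (h : (i : ℕ) < n)
    (h0 : 0 < (i : ℕ)) : ((prevCyc n i : ℕ)) = (i : ℕ) - 1 := by
  rw [prevCyc_val i hn h]
  have e : (i : ℕ) + (n - 1) = ((i : ℕ) - 1) + n := by omega
  rw [e, Nat.add_mod_right, Nat.mod_eq_of_lt (by omega)]

lemma prevCyc_val_zero {n : ℕ} (i : Fin (n + 1)) (hn : 0 < n)
    (h0 : (i : ℕ) = 0) : ((prevCyc n i : ℕ)) = n - 1 := by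
  rw [prevCyc_val i hn (by omega), h0]
  simpa using Nat.mod_eq_of_lt (by omega : n - 1 < n)

/-- In the configuration above, the only enabled channel among the dependent
set `D` is channel `c₁`. -/
theorem only_first_channel_enabled {n : ℕ} (hn : 2 ≤ n) :
    ∀ ch : Fin (n + 1), (ch : ℕ) < n →
      (Enabled (prevCyc n) (config n) ch ↔ ch = ⟨0, by omega⟩) := by
  intro ch hch
  have hn0 : 0 < n := by omega
  constructor
  · rintro ⟨-, hall⟩
    by_contra hne
    have hch0 : 0 < (ch : ℕ) := by
      rcases Nat.eq_zero_or_pos (ch : ℕ) with h0 | h0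
      · exact absurd (Fin.ext h0) hne
      · exact h0
    set p : Fin n := ⟨(ch : ℕ), hch⟩ with hp
    have hcval : ((config n p).c : ℕ) = (ch : ℕ) := rfl
    have hlis : listens (prevCyc n) (config n p) ch := by
      right; left; exact Fin.ext hcval.symm
    obtain ⟨s', hs'⟩ := hall p hlis
    have hprev : ((prevCyc n (config n p).c : ℕ)) = (ch : ℕ) - 1 := by
      rw [prevCyc_val_pos _ hn0 (by rw [hcval]; exact hch) (by rw [hcval]; exact hch0), hcval]
    have hne0 : (ch : ℕ) ≠ 0 := by omega
    have hdval : ((config n p).d : ℕ) = (ch : ℕ) - 1 := by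
      simp [config, hp, hne0]
    rcases hs' with ⟨-, hd, -⟩ | ⟨hc, hd, -⟩
    · have := congrArg Fin.val hd
      rw [hdval, hcval] at this; omega
    · have h1 := congrArg Fin.val hc
      rw [hprev] at h1; omega
  · rintro rfl
    constructor
    · refine ⟨⟨0, by omega⟩, ?_⟩
      right; left; exact Fin.ext rfl
    · intro p hlis
      have hpc : ((config n p).c : ℕ) = (p : ℕ) := rfl
      rcases hlis with hsc | hc | ⟨-, hprev⟩
      · have := congrArg Fin.val hsc
        simp [config] at this; omega
      · have hpv : (p : ℕ) = 0 := (congrArg Fin.val hc).symm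
        refine ⟨_, Or.inl ⟨hc, ?_, rfl⟩⟩
        apply Fin.ext
        simp [config, hpv]
      · have h0 := congrArg Fin.val hprev
        have hp1 : (p : ℕ) = 1 := by
          rcases Nat.eq_zero_or_pos (p : ℕ) with h | h
          · exfalso
            rw [prevCyc_val_zero _ hn0 (by rw [hpc]; exact h)] at h0
            simp at h0; omega
          · rw [prevCyc_val_pos _ hn0 (by rw [hpc]; exact p.isLt)
                (by rw [hpc]; exact h)] at h0
            rw [hpc] at h0
            simp at h0; omega
        refine ⟨_, Or.inr ⟨hprev, ?_, rfl⟩⟩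
        apply Fin.ext
        have hd1 : ((config n p).d : ℕ) = 0 := by simp [config, hp1]
        rw [hd1, prevCyc_val_pos _ hn0 (by rw [hpc]; exact p.isLt)
            (by rw [hpc]; omega), hpc, hp1]
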